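/- Let n ≥ 2, let R be an algebraic curvature operator on ℝⁿ, and let ℓ ∈ ℝ. Then Q(R + ℓ·I) = Q(R) + ℓ·(Ric ⊼ id) + (n−1)·ℓ²·I as symmetric bilinear forms on so(n,ℝ), where the 4-tensors Ric ⊼ id and I are identified with the bilinear forms they induce via T(u,w) = (1/4) Σ_{i,j,k,l} T_{ijkl} u_{ij} w_{kl}. -/

import Mathlib

open Matrix BigOperators Finset

/-- An algebraic curvature operator on ℝⁿ: symmetries and first Bianchi identity. -/
def IsCurvOp (n : ℕ) (R : Fin n → Fin n → Fin n → Fin n → ℝ) : Prop :=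
  (∀ i j k l, R i j k l = - R j i k l) ∧
  (∀ i j k l, R i j k l = - R i j l k) ∧
  (∀ i j k l, R i j k l = R k l i j) ∧
  (∀ i j k l, R i j k l + R j k i l + R k i j l = 0)

/-- The bilinear form `T(u,w) = (1/4) Σ T_{ijkl} u_{ij} w_{kl}` induced by a 4-tensor
on antisymmetric matrices. -/
noncomputable def rformR {n : ℕ} (T : Fin n → Fin n → Fin n → Fin n → ℝ)
    (u w : Matrix (Fin n) (Fin n) ℝ) : ℝ :=
  (1/4) * ∑ i, ∑ j, ∑ k, ∑ l, T i j k l * u i j * w k l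

/-- The Ricci tensor of a curvature operator. -/
noncomputable def ricci {n : ℕ} (R : Fin n → Fin n → Fin n → Fin n → ℝ) :
    Matrix (Fin n) (Fin n) ℝ :=
  Matrix.of fun a b => ∑ i, R i a i b

/-- The symmetric endomorphism `R̂`, characterized by `⟨R̂u, w⟩ = R(u,w)`
for antisymmetric `u, w`, where `⟨u,w⟩ = −tr(uw)/2`. -/
noncomputable def RhatR {n : ℕ} (R : Fin n → Fin n → Fin n → Fin n → ℝ)
    (u : Matrix (Fin n) (Fin n) ℝ) : Matrix (Fin n) (Fin n) ℝ :=
  Matrix.of fun k l => (1/2) * ∑ i, ∑ j, R i j k l * u i j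

/-- The adjoint action `ad_u(x) = ux − xu`. -/
noncomputable def adR {n : ℕ} (u x : Matrix (Fin n) (Fin n) ℝ) : Matrix (Fin n) (Fin n) ℝ :=
  u * x - x * u

/-- Trace of a (linear) endomorphism of the space of `n×n` real matrices, computed with
respect to the standard basis. -/
noncomputable def mtraceR {n : ℕ}
    (f : Matrix (Fin n) (Fin n) ℝ → Matrix (Fin n) (Fin n) ℝ) : ℝ :=
  ∑ p, ∑ q, f (Matrix.single p q 1) p q

/-- `R²(u,w) = ⟨R̂u, R̂w⟩`. -/
noncomputable def R2R {n : ℕ} (R : Fin n → Fin n → Fin n → Fin n → ℝ)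
    (u w : Matrix (Fin n) (Fin n) ℝ) : ℝ :=
  -(Matrix.trace (RhatR R u * RhatR R w)) / 2

/-- `R^#(u,w) = −(1/2) tr(ad_u ∘ R̂ ∘ ad_w ∘ R̂)`. -/
noncomputable def RsharpR {n : ℕ} (R : Fin n → Fin n → Fin n → Fin n → ℝ)
    (u w : Matrix (Fin n) (Fin n) ℝ) : ℝ :=
  -(1/2) * mtraceR (fun x => adR u (RhatR R (adR w (RhatR R x))))

/-- The quadratic term `Q(R) = R² + R^#` as a bilinear form on `so(n,ℝ)`. -/
noncomputable def QformR {n : ℕ} (R : Fin n → Fin n → Fin n → Fin n → ℝ)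
    (u w : Matrix (Fin n) (Fin n) ℝ) : ℝ :=
  R2R R u w + RsharpR R u w

/-- The Kulkarni–Nomizu product of two symmetric matrices, as a 4-tensor. -/
noncomputable def KN {n : ℕ} (A B : Matrix (Fin n) (Fin n) ℝ) :
    Fin n → Fin n → Fin n → Fin n → ℝ :=
  fun i j k l => A i k * B j l + A j l * B i k - A i l * B j k - A j k * B i l

/-- The curvature operator of the unit round sphere: `I_{ijkl} = δ_{ik}δ_{jl} − δ_{il}δ_{jk}`. -/
noncomputable def Iop (n : ℕ) : Fin n → Fin n → Fin n → Fin n → ℝ :=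
  fun i j k l => (if i = k then (1:ℝ) else 0) * (if j = l then 1 else 0)
    - (if i = l then (1:ℝ) else 0) * (if j = k then 1 else 0)

/-!
On `so(n)` the operator `Î` is the identity, so `R̂ + ℓÎ = R̂ + ℓ` there and `R²` changes by
`2ℓ R + ℓ² I`. The trace defining `R^#` runs over all of `gl(n)`, where `Î` is the projection
onto `so(n)`; as `R̂` kills symmetric matrices, takes values in `so(n)`, and `ad_w` commutes with
the projection, the coefficients of `ℓ` and `ℓ²` in `(R + ℓI)^#` are traces of
`ad_u ad_w R̂ + ad_w ad_u R̂` and of `ad_u ad_w Î`. Evaluating `R̂` on matrix units, the first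
Bianchi identity gives `tr(ad_u ad_w R̂) = tr(u w Ric) + 2 R(u,w)` for every curvature operator;
for `R = I`, whose Ricci tensor is `(n-1) id`, this is `-2(n-2) I(u,w)`.
-/

variable {n : ℕ}

lemma sum_pair_swap {ι M : Type*} [Fintype ι] [AddCommMonoid M] (f : ι → ι → ι → ι → M) :
    ∑ i, ∑ j, ∑ k, ∑ l, f i j k l = ∑ k, ∑ l, ∑ i, ∑ j, f i j k l := by
  calc ∑ i, ∑ j, ∑ k, ∑ l, f i j k l = ∑ x : ι × ι, ∑ y : ι × ι, f x.1 x.2 y.1 y.2 := by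
        simp only [Fintype.sum_prod_type]
    _ = ∑ y : ι × ι, ∑ x : ι × ι, f x.1 x.2 y.1 y.2 := Finset.sum_comm
    _ = _ := by simp only [Fintype.sum_prod_type]

lemma apply_eq_neg_apply_swap {ι α : Type*} [Neg α] {x : Matrix ι ι α} (hx : xᵀ = -x) (a b : ι) :
    x a b = -x b a := by
  rw [← Matrix.neg_apply, ← hx]; rfl

lemma rformR_comm {T : Fin n → Fin n → Fin n → Fin n → ℝ}
    (hT : ∀ i j k l, T i j k l = T k l i j) (u w : Matrix (Fin n) (Fin n) ℝ) :
    rformR T u w = rformR T w u := by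
  rw [rformR, rformR, sum_pair_swap]
  congr! 5
  rw [hT]; ring

lemma ricci_isSymm {R : Fin n → Fin n → Fin n → Fin n → ℝ}
    (h3 : ∀ i j k l, R i j k l = R k l i j) : (ricci R).IsSymm := by
  ext a b
  exact Fintype.sum_congr _ _ fun i => h3 i b i a

lemma trace_RhatR_mul (R : Fin n → Fin n → Fin n → Fin n → ℝ) (u : Matrix (Fin n) (Fin n) ℝ)
    {w : Matrix (Fin n) (Fin n) ℝ} (hw : wᵀ = -w) :
    trace (RhatR R u * w) = -2 * rformR R u w := by
  simp only [trace, Matrix.diag, Matrix.mul_apply, RhatR, of_apply, rformR, Finset.sum_mul,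
    Finset.mul_sum]
  rw [sum_pair_swap]
  congr! 4 with i _ j _ k _ l _
  rw [apply_eq_neg_apply_swap hw l k]; ring

lemma isCurvOp_Iop (n : ℕ) : IsCurvOp n (Iop n) := by
  refine ⟨?_, ?_, ?_, ?_⟩ <;> intro i j k l <;> simp only [Iop] <;> split_ifs <;> subst_vars <;>
    simp_all

lemma ricci_Iop : ricci (Iop n) = ((n : ℝ) - 1) • (1 : Matrix (Fin n) (Fin n) ℝ) := by
  ext a b
  simp only [ricci, Iop, of_apply, Matrix.smul_apply, one_apply]
  split_ifs <;> simp_all [Finset.sum_sub_distrib]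

lemma RhatR_Iop (x : Matrix (Fin n) (Fin n) ℝ) : RhatR (Iop n) x = (2⁻¹ : ℝ) • (x - xᵀ) := by
  ext k l
  simp [RhatR, Iop, sub_mul, ite_mul, Finset.sum_sub_distrib]

lemma RhatR_Iop_of_skew {x : Matrix (Fin n) (Fin n) ℝ} (hx : xᵀ = -x) : RhatR (Iop n) x = x := by
  rw [RhatR_Iop, hx, sub_neg_eq_add, ← two_smul ℝ x, smul_smul]
  norm_num

lemma trace_mul_eq_rformR_Iop {u w : Matrix (Fin n) (Fin n) ℝ} (hu : uᵀ = -u) (hw : wᵀ = -w) :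
    trace (u * w) = -2 * rformR (Iop n) u w := by
  rw [← trace_RhatR_mul _ _ hw, RhatR_Iop_of_skew hu]

lemma transpose_RhatR {R : Fin n → Fin n → Fin n → Fin n → ℝ}
    (h2 : ∀ i j k l, R i j k l = -R i j l k) (x : Matrix (Fin n) (Fin n) ℝ) :
    (RhatR R x)ᵀ = -RhatR R x := by
  ext k l
  simp only [RhatR, transpose_apply, Matrix.neg_apply, of_apply, ← mul_neg,
    ← Finset.sum_neg_distrib]
  congr! 3
  rw [h2]; ring

lemma RhatR_transpose {R : Fin n → Fin n → Fin n → Fin n → ℝ}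
    (h1 : ∀ i j k l, R i j k l = -R j i k l) (x : Matrix (Fin n) (Fin n) ℝ) :
    RhatR R xᵀ = -RhatR R x := by
  ext k l
  simp only [RhatR, transpose_apply, Matrix.neg_apply, of_apply, ← mul_neg,
    ← Finset.sum_neg_distrib]
  rw [Finset.sum_comm]
  congr! 3
  rw [h1]; ring

lemma transpose_adR {u : Matrix (Fin n) (Fin n) ℝ} (hu : uᵀ = -u) (x : Matrix (Fin n) (Fin n) ℝ) :
    (adR u x)ᵀ = adR u xᵀ := by
  simp only [adR, transpose_sub, transpose_mul, hu, Matrix.neg_mul, Matrix.mul_neg]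
  abel

lemma RhatR_add_smul_Iop (R : Fin n → Fin n → Fin n → Fin n → ℝ) (ℓ : ℝ)
    (x : Matrix (Fin n) (Fin n) ℝ) :
    RhatR (fun i j k l => R i j k l + ℓ * Iop n i j k l) x = RhatR R x + ℓ • RhatR (Iop n) x := by
  ext k l
  simp only [RhatR, Matrix.add_apply, Matrix.smul_apply, of_apply, smul_eq_mul, add_mul,
    Finset.mul_sum, ← Finset.sum_add_distrib]
  congr! 2
  ring

lemma R2R_add_smul_Iop {R : Fin n → Fin n → Fin n → Fin n → ℝ}
    (h3 : ∀ i j k l, R i j k l = R k l i j) (ℓ : ℝ) {u w : Matrix (Fin n) (Fin n) ℝ}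
    (hu : uᵀ = -u) (hw : wᵀ = -w) :
    R2R (fun i j k l => R i j k l + ℓ * Iop n i j k l) u w
      = R2R R u w + 2 * ℓ * rformR R u w + ℓ ^ 2 * rformR (Iop n) u w := by
  have hRw : trace (u * RhatR R w) = -2 * rformR R u w := by
    rw [trace_mul_comm, trace_RhatR_mul _ _ hu, rformR_comm h3]
  simp only [R2R, RhatR_add_smul_Iop, RhatR_Iop_of_skew hu, RhatR_Iop_of_skew hw, add_mul,
    mul_add, smul_mul_assoc, mul_smul_comm, trace_add, trace_smul,
    trace_RhatR_mul _ _ hw, hRw, trace_mul_eq_rformR_Iop hu hw, smul_eq_mul]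
  ring

noncomputable def rhatLinear (R : Fin n → Fin n → Fin n → Fin n → ℝ) :
    Module.End ℝ (Matrix (Fin n) (Fin n) ℝ) where
  toFun := RhatR R
  map_add' x y := by
    ext k l
    simp only [RhatR, of_apply, Matrix.add_apply, mul_add, Finset.sum_add_distrib]
  map_smul' c x := by
    ext k l
    simp only [RhatR, of_apply, Matrix.smul_apply, smul_eq_mul, RingHom.id_apply, Finset.mul_sum]
    congr! 2
    ring

@[simp] lemma rhatLinear_apply (R : Fin n → Fin n → Fin n → Fin n → ℝ)
    (x : Matrix (Fin n) (Fin n) ℝ) : rhatLinear R x = RhatR R x := rfl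

noncomputable def adLinear (u : Matrix (Fin n) (Fin n) ℝ) :
    Module.End ℝ (Matrix (Fin n) (Fin n) ℝ) :=
  LinearMap.mulLeft ℝ u - LinearMap.mulRight ℝ u

@[simp] lemma adLinear_apply (u x : Matrix (Fin n) (Fin n) ℝ) : adLinear u x = adR u x := rfl

lemma mtraceR_eq_trace (f : Module.End ℝ (Matrix (Fin n) (Fin n) ℝ)) :
    mtraceR f = LinearMap.trace ℝ _ f := by
  rw [LinearMap.trace_eq_matrix_trace ℝ (Matrix.stdBasis ℝ (Fin n) (Fin n)), Matrix.trace,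
    Fintype.sum_prod_type, mtraceR]
  simp [LinearMap.toMatrix_apply, Matrix.stdBasis, Matrix.single_eq_of_single_single]

lemma RsharpR_eq_trace (R : Fin n → Fin n → Fin n → Fin n → ℝ) (u w : Matrix (Fin n) (Fin n) ℝ) :
    RsharpR R u w = -(1 / 2) * LinearMap.trace ℝ _
      (adLinear u * rhatLinear R * adLinear w * rhatLinear R) := by
  rw [RsharpR, ← mtraceR_eq_trace]
  rfl

lemma rhatLinear_add_smul_Iop (R : Fin n → Fin n → Fin n → Fin n → ℝ) (ℓ : ℝ) :
    rhatLinear (fun i j k l => R i j k l + ℓ * Iop n i j k l)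
      = rhatLinear R + ℓ • rhatLinear (Iop n) :=
  LinearMap.ext (RhatR_add_smul_Iop R ℓ)

lemma rhatLinear_mul_rhatLinear_Iop {R : Fin n → Fin n → Fin n → Fin n → ℝ}
    (h1 : ∀ i j k l, R i j k l = -R j i k l) :
    rhatLinear R * rhatLinear (Iop n) = rhatLinear R := by
  ext1 x
  rw [Module.End.mul_apply, rhatLinear_apply (Iop n), RhatR_Iop, map_smul, map_sub,
    rhatLinear_apply, rhatLinear_apply, RhatR_transpose h1]
  module

lemma rhatLinear_Iop_mul_rhatLinear {R : Fin n → Fin n → Fin n → Fin n → ℝ}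
    (h2 : ∀ i j k l, R i j k l = -R i j l k) :
    rhatLinear (Iop n) * rhatLinear R = rhatLinear R :=
  LinearMap.ext fun x => RhatR_Iop_of_skew (transpose_RhatR h2 x)

lemma adLinear_mul_rhatLinear_Iop {w : Matrix (Fin n) (Fin n) ℝ} (hw : wᵀ = -w) :
    adLinear w * rhatLinear (Iop n) = rhatLinear (Iop n) * adLinear w := by
  ext1 x
  rw [Module.End.mul_apply, Module.End.mul_apply, rhatLinear_apply, rhatLinear_apply, RhatR_Iop,
    RhatR_Iop, map_smul, map_sub, adLinear_apply, adLinear_apply, transpose_adR hw]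

lemma RsharpR_add_smul_Iop {R : Fin n → Fin n → Fin n → Fin n → ℝ}
    (h1 : ∀ i j k l, R i j k l = -R j i k l) (h2 : ∀ i j k l, R i j k l = -R i j l k) (ℓ : ℝ)
    (u : Matrix (Fin n) (Fin n) ℝ) {w : Matrix (Fin n) (Fin n) ℝ} (hw : wᵀ = -w) :
    RsharpR (fun i j k l => R i j k l + ℓ * Iop n i j k l) u w
      = RsharpR R u w
        - ℓ / 2 * (LinearMap.trace ℝ _ (adLinear u * adLinear w * rhatLinear R)
          + LinearMap.trace ℝ _ (adLinear w * adLinear u * rhatLinear R))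
        - ℓ ^ 2 / 2 * LinearMap.trace ℝ _ (adLinear u * adLinear w * rhatLinear (Iop n)) := by
  have hPP (X) : rhatLinear (Iop n) * (rhatLinear (Iop n) * X) = rhatLinear (Iop n) * X := by
    rw [← mul_assoc, rhatLinear_Iop_mul_rhatLinear (isCurvOp_Iop n).2.1]
  have hA (X) : rhatLinear R * (rhatLinear (Iop n) * X) = rhatLinear R * X := by
    rw [← mul_assoc, rhatLinear_mul_rhatLinear_Iop h1]
  have hPw (X) :
      rhatLinear (Iop n) * (adLinear w * X) = adLinear w * (rhatLinear (Iop n) * X) := by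
    rw [← mul_assoc, ← adLinear_mul_rhatLinear_Iop hw, mul_assoc]
  have expand : adLinear u * (rhatLinear R + ℓ • rhatLinear (Iop n)) * adLinear w
        * (rhatLinear R + ℓ • rhatLinear (Iop n))
      = adLinear u * rhatLinear R * adLinear w * rhatLinear R
        + ℓ • (adLinear u * adLinear w * rhatLinear R + adLinear u * rhatLinear R * adLinear w)
        + ℓ ^ 2 • (adLinear u * adLinear w * rhatLinear (Iop n)) := by
    simp only [mul_add, add_mul, smul_mul_assoc, mul_smul_comm, mul_assoc, hA, hPw,
      adLinear_mul_rhatLinear_Iop hw, hPP, rhatLinear_Iop_mul_rhatLinear h2]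
    module
  rw [RsharpR_eq_trace, RsharpR_eq_trace, rhatLinear_add_smul_Iop, expand, map_add, map_add,
    map_smul, map_smul, map_add, LinearMap.trace_mul_comm ℝ (adLinear u * rhatLinear R),
    ← mul_assoc]
  simp only [smul_eq_mul]
  ring

lemma RhatR_single (R : Fin n → Fin n → Fin n → Fin n → ℝ) (p q : Fin n) :
    RhatR R (single p q 1) = (2⁻¹ : ℝ) • of (R p q) := by
  ext k l
  simp [RhatR, single_apply, ite_and]

lemma trace_mul_rhatLinear (R : Fin n → Fin n → Fin n → Fin n → ℝ)
    (f : Module.End ℝ (Matrix (Fin n) (Fin n) ℝ)) :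
    LinearMap.trace ℝ _ (f * rhatLinear R) = 2⁻¹ * ∑ p, ∑ q, f (of (R p q)) p q := by
  simp only [← mtraceR_eq_trace, mtraceR, Module.End.mul_apply, rhatLinear_apply, RhatR_single,
    map_smul, Matrix.smul_apply, smul_eq_mul, Finset.mul_sum]

lemma sum_of_mul_apply_eq_trace (R : Fin n → Fin n → Fin n → Fin n → ℝ)
    (B : Matrix (Fin n) (Fin n) ℝ) :
    ∑ p, ∑ q, (of (R p q) * B) p q = trace (ricci R * B) := by
  simp only [trace, Matrix.diag, Matrix.mul_apply, of_apply, ricci, Finset.sum_mul]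
  rw [Finset.sum_comm]
  exact Finset.sum_congr rfl fun _ _ => Finset.sum_comm

lemma sum_mul_of_apply_eq_trace {R : Fin n → Fin n → Fin n → Fin n → ℝ}
    (h1 : ∀ i j k l, R i j k l = -R j i k l) (h2 : ∀ i j k l, R i j k l = -R i j l k)
    (A : Matrix (Fin n) (Fin n) ℝ) :
    ∑ p, ∑ q, (A * of (R p q)) p q = trace (A * (ricci R)ᵀ) := by
  simp only [trace, Matrix.diag, Matrix.mul_apply, of_apply, transpose_apply, ricci,
    Finset.mul_sum]
  refine Finset.sum_congr rfl fun p _ => ?_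
  rw [Finset.sum_comm]
  congr! 2 with a _ q _
  rw [h1, h2, neg_neg]

lemma sum_mul_of_mul_apply_eq_rformR {R : Fin n → Fin n → Fin n → Fin n → ℝ} (hR : IsCurvOp n R)
    {A B : Matrix (Fin n) (Fin n) ℝ} (hA : Aᵀ = -A) (hB : Bᵀ = -B) :
    ∑ p, ∑ q, (A * of (R p q) * B) p q = -2 * rformR R A B := by
  obtain ⟨h1, -, -, h4⟩ := hR
  set P := ∑ i, ∑ j, ∑ k, ∑ l, R i j k l * A i k * B l j
  have hP : ∑ p, ∑ q, (A * of (R p q) * B) p q = P := by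
    simp only [Matrix.mul_apply, of_apply, Finset.sum_mul]
    congr! 2
    rw [Finset.sum_comm]
    congr! 2
    ring
  have hcyc : ∑ i, ∑ j, ∑ k, ∑ l, R j k i l * A i k * B l j = P := by
    calc _ = ∑ i, ∑ j, ∑ k, ∑ l, R k j i l * A k i * B l j := by
          congr! 4 with i _ j _ k _ l _
          rw [h1 j k i l, apply_eq_neg_apply_swap hA i k]; ring
      _ = P := (Finset.sum_comm.trans (Finset.sum_congr rfl fun _ _ => Finset.sum_comm)).trans
          Finset.sum_comm
  have hswap : ∑ i, ∑ j, ∑ k, ∑ l, R k i j l * A i k * B l j = 4 * rformR R A B := by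
    calc _ = ∑ i, ∑ j, ∑ k, ∑ l, R i k j l * A i k * B j l := by
          congr! 4 with i _ j _ k _ l _
          rw [h1 k i j l, apply_eq_neg_apply_swap hB l j]; ring
      _ = 4 * rformR R A B := by
          rw [rformR, ← mul_assoc]
          norm_num
          exact Finset.sum_congr rfl fun _ _ => Finset.sum_comm
  have hBianchi : P = -(∑ i, ∑ j, ∑ k, ∑ l, R j k i l * A i k * B l j)
      - ∑ i, ∑ j, ∑ k, ∑ l, R k i j l * A i k * B l j := by
    simp only [P, ← Finset.sum_neg_distrib, ← Finset.sum_sub_distrib]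
    congr! 4 with i _ j _ k _ l _
    linear_combination (A i k * B l j) * h4 i j k l
  rw [hP]
  linarith

lemma trace_mul_mul_of_skew {ι α : Type*} [Fintype ι] [CommRing α] {A u w : Matrix ι ι α}
    (hA : A.IsSymm) (hu : uᵀ = -u) (hw : wᵀ = -w) : trace (A * (w * u)) = trace (u * w * A) := by
  rw [← trace_transpose, transpose_mul, transpose_mul, hu, hw, hA.eq, neg_mul_neg]

lemma trace_adLinear_mul_adLinear_mul_rhatLinear {R : Fin n → Fin n → Fin n → Fin n → ℝ}
    (hR : IsCurvOp n R) {u w : Matrix (Fin n) (Fin n) ℝ} (hu : uᵀ = -u) (hw : wᵀ = -w) :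
    LinearMap.trace ℝ _ (adLinear u * adLinear w * rhatLinear R)
      = trace (u * w * ricci R) + 2 * rformR R u w := by
  have hRic := ricci_isSymm hR.2.2.1
  have hexpand (X : Matrix (Fin n) (Fin n) ℝ) :
      (adLinear u * adLinear w) X = u * w * X - u * X * w - w * X * u + X * (w * u) := by
    simp only [Module.End.mul_apply, adLinear_apply, adR]
    noncomm_ring
  rw [trace_mul_rhatLinear]
  simp only [hexpand, Matrix.add_apply, Matrix.sub_apply, Finset.sum_add_distrib,
    Finset.sum_sub_distrib, sum_of_mul_apply_eq_trace, sum_mul_of_apply_eq_trace hR.1 hR.2.1,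
    sum_mul_of_mul_apply_eq_rformR hR hu hw, sum_mul_of_mul_apply_eq_rformR hR hw hu, hRic.eq,
    trace_mul_mul_of_skew hRic hu hw, rformR_comm hR.2.2.1 w u]
  ring

lemma rformR_KN_one {A u w : Matrix (Fin n) (Fin n) ℝ} (hA : A.IsSymm) (hu : uᵀ = -u)
    (hw : wᵀ = -w) : rformR (KN A 1) u w = -trace (u * w * A) := by
  set T := ∑ x, ∑ y, ∑ z, u x y * w y z * A z x
  have htrace : trace (u * w * A) = T := by
    simp only [trace, Matrix.diag, Matrix.mul_apply, Finset.sum_mul]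
    exact Finset.sum_congr rfl fun _ _ => Finset.sum_comm
  have e1 : ∑ x, ∑ y, ∑ z, A x z * u x y * w z y = -T := by
    simp only [T, ← Finset.sum_neg_distrib]
    congr! 3 with x _ y _ z _
    rw [hA.apply z x, apply_eq_neg_apply_swap hw z y]; ring
  have e2 : ∑ x, ∑ y, ∑ z, A y z * u x y * w x z = -T := by
    simp only [T, ← Finset.sum_neg_distrib]
    rw [Finset.sum_comm]
    congr! 3 with y _ x _ z _
    rw [hA.apply z y, apply_eq_neg_apply_swap hu x y]; ring
  have e3 : ∑ x, ∑ y, ∑ z, A x z * u x y * w y z = T := by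
    congr! 3 with x _ y _ z _
    rw [hA.apply z x]; ring
  have e4 : ∑ x, ∑ y, ∑ z, A y z * u x y * w z x = T := by
    rw [Finset.sum_comm]
    congr! 3 with y _ x _ z _
    rw [hA.apply z y, apply_eq_neg_apply_swap hu x y, apply_eq_neg_apply_swap hw z x]; ring
  simp only [rformR, KN, one_apply, mul_ite, mul_one, mul_zero, sub_mul, add_mul, ite_mul,
    zero_mul, Finset.sum_sub_distrib, Finset.sum_add_distrib, Finset.sum_ite_eq, Finset.mem_univ,
    if_true, Finset.sum_ite_irrel, Finset.sum_const_zero]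
  rw [e1, e2, e3, e4, htrace]
  ring

theorem stmt7_general (n : ℕ) (R : Fin n → Fin n → Fin n → Fin n → ℝ)
    (hR : IsCurvOp n R) (ℓ : ℝ) :
    ∀ u w : Matrix (Fin n) (Fin n) ℝ, uᵀ = -u → wᵀ = -w →
      QformR (fun i j k l => R i j k l + ℓ * Iop n i j k l) u w =
        QformR R u w + ℓ * rformR (KN (ricci R) 1) u w
          + (n - 1) * ℓ^2 * rformR (Iop n) u w := by
  intro u w hu hw
  obtain ⟨h1, h2, h3, -⟩ := id hR
  have hRic := ricci_isSymm h3
  rw [QformR, QformR, R2R_add_smul_Iop h3 ℓ hu hw, RsharpR_add_smul_Iop h1 h2 ℓ u hw,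
    trace_adLinear_mul_adLinear_mul_rhatLinear hR hu hw,
    trace_adLinear_mul_adLinear_mul_rhatLinear hR hw hu,
    trace_adLinear_mul_adLinear_mul_rhatLinear (isCurvOp_Iop n) hu hw,
    trace_mul_comm (w * u), trace_mul_mul_of_skew hRic hu hw, rformR_comm h3 w u,
    ricci_Iop, Matrix.mul_smul, mul_one, trace_smul, smul_eq_mul, trace_mul_eq_rformR_Iop hu hw,
    rformR_KN_one hRic hu hw]
  ring

/-- `Q(R + ℓ·I) = Q(R) + ℓ·(Ric ⊼ id) + (n−1)·ℓ²·I` as symmetric bilinear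
forms on `so(n,ℝ)`. -/
theorem stmt7 (n : ℕ) (hn : 2 ≤ n) (R : Fin n → Fin n → Fin n → Fin n → ℝ)
    (hR : IsCurvOp n R) (ℓ : ℝ) :
    ∀ u w : Matrix (Fin n) (Fin n) ℝ, uᵀ = -u → wᵀ = -w →
      QformR (fun i j k l => R i j k l + ℓ * Iop n i j k l) u w =
        QformR R u w + ℓ * rformR (KN (ricci R) 1) u w
          + (n - 1) * ℓ^2 * rformR (Iop n) u w :=
  stmt7_general n R hR ℓ
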